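/- Let Ω ∈ ℝ^{p×p} be symmetric positive definite, let α ∈ ℝ^{p×r} have full column rank r, and let α_⊥ ∈ ℝ^{p×(p−r)} have full column rank with αᵀα_⊥ = 0. Then α_⊥ᵀ Ω α_⊥ and αᵀ Ω⁻¹ α are invertible and the non-orthogonal projection identity I_p = Ω α_⊥ (α_⊥ᵀ Ω α_⊥)⁻¹ α_⊥ᵀ + α (αᵀ Ω⁻¹ α)⁻¹ αᵀ Ω⁻¹ holds. (Identity (eq_proj_id) used in the proof of Theorem 7.) -/

import Mathlib

open Matrix

private lemma aux_inj {m n : ℕ} (A : Matrix (Fin m) (Fin n) ℝ) (h : A.rank = n) :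
    Function.Injective A.mulVec := by
  have h1 := LinearMap.finrank_range_add_finrank_ker A.mulVecLin
  rw [Matrix.rank] at h
  rw [h] at h1
  have h2 : Module.finrank ℝ (Fin n → ℝ) = n := by simp
  rw [h2] at h1
  have hker : Module.finrank ℝ (LinearMap.ker A.mulVecLin) = 0 := by omega
  have hbot : LinearMap.ker A.mulVecLin = ⊥ := Submodule.finrank_eq_zero.mp hker
  have := LinearMap.ker_eq_bot.mp hbot
  intro x y hxy
  exact this (by simpa [Matrix.mulVecLin_apply] using hxy)

private lemma aux_posDef {m n : ℕ} {Ω : Matrix (Fin m) (Fin m) ℝ} (hΩ : Ω.PosDef)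
    (B : Matrix (Fin m) (Fin n) ℝ) (hB : Function.Injective B.mulVec) :
    (Bᵀ * Ω * B).PosDef := by
  have hct : Bᵀ = Bᴴ := (conjTranspose_eq_transpose_of_trivial B).symm
  refine posDef_iff_dotProduct_mulVec.mpr ⟨?_, ?_⟩
  · rw [hct]; exact isHermitian_conjTranspose_mul_mul B hΩ.1
  · intro x hx
    have hBx : B *ᵥ x ≠ 0 := by
      intro h
      exact hx (hB (show B *ᵥ x = B *ᵥ 0 by simpa using h))
    have := hΩ.dotProduct_mulVec_pos (x := B *ᵥ x) hBx
    simpa only [hct, star_mulVec, dotProduct_mulVec, vecMul_vecMul] using this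

/-- The non-orthogonal projection identity (eq_proj_id) used in the proof of
Theorem 7: `I = Ω α⊥ (α⊥ᵀ Ω α⊥)⁻¹ α⊥ᵀ + α (αᵀ Ω⁻¹ α)⁻¹ αᵀ Ω⁻¹`. -/
theorem stmt15 {p r : ℕ}
    (Ω : Matrix (Fin p) (Fin p) ℝ) (hΩ : Ω.PosDef)
    (α : Matrix (Fin p) (Fin r) ℝ) (hα : α.rank = r)
    (αperp : Matrix (Fin p) (Fin (p - r)) ℝ)
    (hperp : αᵀ * αperp = 0) (hαperp : αperp.rank = p - r) :
    IsUnit (αperpᵀ * Ω * αperp) ∧ IsUnit (αᵀ * Ω⁻¹ * α) ∧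
    (1 : Matrix (Fin p) (Fin p) ℝ) =
      Ω * αperp * (αperpᵀ * Ω * αperp)⁻¹ * αperpᵀ +
        α * (αᵀ * Ω⁻¹ * α)⁻¹ * αᵀ * Ω⁻¹ := by
  -- basic facts
  have hr : r ≤ p := by
    have := α.rank_le_height
    omega
  have hΩdet : IsUnit Ω.det := hΩ.det_pos.ne'.isUnit
  have hΩinv : (Ω⁻¹).PosDef := hΩ.inv
  have hA₁ : (αperpᵀ * Ω * αperp).PosDef :=
    aux_posDef hΩ αperp (aux_inj αperp hαperp)
  have hA₂ : (αᵀ * Ω⁻¹ * α).PosDef :=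
    aux_posDef hΩinv α (aux_inj α hα)
  have hA₁det : IsUnit (αperpᵀ * Ω * αperp).det := hA₁.det_pos.ne'.isUnit
  have hA₂det : IsUnit (αᵀ * Ω⁻¹ * α).det := hA₂.det_pos.ne'.isUnit
  refine ⟨hA₁.isUnit, hA₂.isUnit, ?_⟩
  set A₁ := αperpᵀ * Ω * αperp with hA₁def
  set A₂ := αᵀ * Ω⁻¹ * α with hA₂def
  set M : Matrix (Fin p) (Fin p) ℝ :=
    Ω * αperp * A₁⁻¹ * αperpᵀ + α * A₂⁻¹ * αᵀ * Ω⁻¹ with hMdef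
  have hperp' : αperpᵀ * α = 0 := by
    have := congrArg Matrix.transpose hperp
    simpa [Matrix.transpose_mul] using this
  have hinvΩ : Ω⁻¹ * Ω = 1 := Matrix.nonsing_inv_mul Ω hΩdet
  -- the combined matrix and its left inverse
  set C : Matrix (Fin p) (Fin (p - r) ⊕ Fin r) ℝ := fromCols (Ω * αperp) α with hCdef
  set L : Matrix (Fin (p - r) ⊕ Fin r) (Fin p) ℝ := fromRows αperpᵀ (αᵀ * Ω⁻¹) with hLdef
  have hLC : L * C = fromBlocks A₁ 0 0 A₂ := by
    have e3 : αᵀ * Ω⁻¹ * (Ω * αperp) = 0 := by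
      rw [Matrix.mul_assoc αᵀ, ← Matrix.mul_assoc Ω⁻¹, hinvΩ, Matrix.one_mul, hperp]
    rw [hLdef, hCdef, fromRows_mul_fromCols,
      show αperpᵀ * (Ω * αperp) = A₁ from (Matrix.mul_assoc _ _ _).symm,
      hperp', e3, ← hA₂def]
  set E : Matrix (Fin (p - r) ⊕ Fin r) (Fin (p - r) ⊕ Fin r) ℝ :=
    fromBlocks A₁⁻¹ 0 0 A₂⁻¹ with hEdef
  have hELC : (E * L) * C = 1 := by
    rw [Matrix.mul_assoc, hLC, hEdef, fromBlocks_multiply]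
    simp [Matrix.nonsing_inv_mul _ hA₁det, Matrix.nonsing_inv_mul _ hA₂det,
      ← fromBlocks_one]
  have e : Fin p ≃ Fin (p - r) ⊕ Fin r :=
    (finCongr (by omega : p = (p - r) + r)).trans finSumFinEquiv.symm
  have hCEL : C * (E * L) = 1 :=
    (Matrix.mul_eq_one_comm_of_equiv e).mpr hELC
  -- M fixes the columns of C
  have k1 : M * (Ω * αperp) = Ω * αperp := by
    rw [hMdef, Matrix.add_mul]
    have t1 : Ω * αperp * A₁⁻¹ * αperpᵀ * (Ω * αperp) = Ω * αperp := by
      have h : αperpᵀ * (Ω * αperp) = A₁ := (Matrix.mul_assoc _ _ _).symm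
      rw [Matrix.mul_assoc (Ω * αperp * A₁⁻¹), h, Matrix.mul_assoc,
        Matrix.nonsing_inv_mul _ hA₁det, Matrix.mul_one]
    have t2 : α * A₂⁻¹ * αᵀ * Ω⁻¹ * (Ω * αperp) = 0 := by
      rw [Matrix.mul_assoc (α * A₂⁻¹ * αᵀ), ← Matrix.mul_assoc Ω⁻¹, hinvΩ,
        Matrix.one_mul, Matrix.mul_assoc (α * A₂⁻¹), hperp, Matrix.mul_zero]
    rw [t1, t2, add_zero]
  have k2 : M * α = α := by
    rw [hMdef, Matrix.add_mul]
    have t1 : Ω * αperp * A₁⁻¹ * αperpᵀ * α = 0 := by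
      rw [Matrix.mul_assoc (Ω * αperp * A₁⁻¹), hperp', Matrix.mul_zero]
    have t2 : α * A₂⁻¹ * αᵀ * Ω⁻¹ * α = α := by
      rw [Matrix.mul_assoc (α * A₂⁻¹ * αᵀ), Matrix.mul_assoc (α * A₂⁻¹),
        show αᵀ * (Ω⁻¹ * α) = A₂ from (Matrix.mul_assoc _ _ _).symm,
        Matrix.mul_assoc, Matrix.nonsing_inv_mul _ hA₂det, Matrix.mul_one]
    rw [t1, t2, zero_add]
  have hMC : M * C = C := by
    rw [hCdef, mul_fromCols, k1, k2]
  -- conclude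
  have : M = 1 := by
    calc M = M * (C * (E * L)) := by rw [hCEL, Matrix.mul_one]
    _ = (M * C) * (E * L) := by rw [Matrix.mul_assoc]
    _ = C * (E * L) := by rw [hMC]
    _ = 1 := hCEL
  rw [hMdef] at this
  exact this.symm
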